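/- arXiv:1407.7900 — 3 statements merged into one kernel-verified Lean document; each statement's English description precedes it below -/
import Mathlib

section
/- For every natural number i, the i-th stage of the discrete Sierpinski triangle has cardinality |S_i| = 4·3^i. -/
/-- Stages of the discrete (non-tree) Sierpinski triangle:
`S_0 = {(0,0),(-1,0),(0,1),(-1,1)}` and
`S_{i+1} = S_i ∪ (S_i + 2^i·(1,2)) ∪ (S_i + 2^i·(-1,2))`. -/
def sierpTri : ℕ → Finset (ℤ × ℤ)
  | 0 => {(0, 0), (-1, 0), (0, 1), (-1, 1)}
  | i + 1 =>
      sierpTri i ∪ (sierpTri i).image (· + ((2 : ℤ) ^ i, 2 ^ (i + 1))) ∪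
        (sierpTri i).image (· + (-(2 : ℤ) ^ i, 2 ^ (i + 1)))

lemma sierpTri_bound (i : ℕ) : ∀ p ∈ sierpTri i,
    -(2:ℤ)^i ≤ p.1 ∧ p.1 ≤ 2^i - 1 ∧ 0 ≤ p.2 ∧ p.2 ≤ 2^(i+1) - 1 := by
  induction i with
  | zero =>
    intro p hp
    fin_cases hp <;> norm_num
  | succ n ih =>
    intro p hp
    simp only [sierpTri, Finset.mem_union, Finset.mem_image] at hp
    have h2 : (0:ℤ) < 2^n := by positivity
    rcases hp with (hp | ⟨q, hq, rfl⟩) | ⟨q, hq, rfl⟩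
    · obtain ⟨h1, h2', h3, h4⟩ := ih p hp
      have e1 : (2:ℤ)^(n+1) = 2 * 2^n := by ring
      have e2 : (2:ℤ)^(n+2) = 4 * 2^n := by ring
      exact ⟨by linarith, by linarith, h3, by linarith⟩
    · obtain ⟨h1, h2', h3, h4⟩ := ih q hq
      have e1 : (2:ℤ)^(n+1) = 2 * 2^n := by ring
      have e2 : (2:ℤ)^(n+2) = 4 * 2^n := by ring
      simp only [Prod.fst_add, Prod.snd_add]
      constructor
      · linarith
      refine ⟨by linarith, by linarith, by linarith⟩
    · obtain ⟨h1, h2', h3, h4⟩ := ih q hq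
      have e1 : (2:ℤ)^(n+1) = 2 * 2^n := by ring
      have e2 : (2:ℤ)^(n+2) = 4 * 2^n := by ring
      simp only [Prod.fst_add, Prod.snd_add]
      constructor
      · linarith
      refine ⟨by linarith, by linarith, by linarith⟩

/-- The `i`-th stage of the discrete Sierpinski triangle has
cardinality `|S_i| = 4·3^i`. -/
theorem sierpTri_card (i : ℕ) : (sierpTri i).card = 4 * 3 ^ i := by
  induction i with
  | zero => decide
  | succ n ih =>
    have h2 : (0:ℤ) < 2^n := by positivity
    have hinj : ∀ v : ℤ × ℤ, Set.InjOn (· + v) (sierpTri n : Set (ℤ × ℤ)) :=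
      fun v => (add_left_injective v).injOn
    have hc1 : ((sierpTri n).image (· + ((2 : ℤ) ^ n, 2 ^ (n + 1)))).card = (sierpTri n).card :=
      Finset.card_image_of_injOn (hinj _)
    have hc2 : ((sierpTri n).image (· + (-(2 : ℤ) ^ n, 2 ^ (n + 1)))).card = (sierpTri n).card :=
      Finset.card_image_of_injOn (hinj _)
    have hd1 : Disjoint (sierpTri n) ((sierpTri n).image (· + ((2 : ℤ) ^ n, 2 ^ (n + 1)))) := by
      rw [Finset.disjoint_left]
      rintro p hp hp'
      simp only [Finset.mem_image] at hp'
      obtain ⟨q, hq, rfl⟩ := hp'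
      have b1 := sierpTri_bound n _ hp
      have b2 := sierpTri_bound n q hq
      simp only [Prod.snd_add] at b1
      have : (2:ℤ)^(n+1) = 2*2^n := by ring
      linarith [b1.2.2.2, b2.2.2.1]
    have hd2 : Disjoint (sierpTri n) ((sierpTri n).image (· + (-(2 : ℤ) ^ n, 2 ^ (n + 1)))) := by
      rw [Finset.disjoint_left]
      rintro p hp hp'
      simp only [Finset.mem_image] at hp'
      obtain ⟨q, hq, rfl⟩ := hp'
      have b1 := sierpTri_bound n _ hp
      have b2 := sierpTri_bound n q hq
      simp only [Prod.snd_add] at b1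
      have : (2:ℤ)^(n+1) = 2*2^n := by ring
      linarith [b1.2.2.2, b2.2.2.1]
    have hd3 : Disjoint ((sierpTri n).image (· + ((2 : ℤ) ^ n, 2 ^ (n + 1))))
        ((sierpTri n).image (· + (-(2 : ℤ) ^ n, 2 ^ (n + 1)))) := by
      rw [Finset.disjoint_left]
      rintro p hp hp'
      simp only [Finset.mem_image] at hp hp'
      obtain ⟨q, hq, rfl⟩ := hp
      obtain ⟨r, hr, he⟩ := hp'
      have b1 := sierpTri_bound n q hq
      have b2 := sierpTri_bound n r hr
      have hx : r.1 + -(2:ℤ)^n = q.1 + 2^n := congrArg Prod.fst he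
      linarith [b1.1, b2.2.1]
    show (sierpTri n ∪ _ ∪ _).card = _
    rw [Finset.card_union_of_disjoint, Finset.card_union_of_disjoint hd1, hc1, hc2, ih]
    · ring
    · rw [Finset.disjoint_union_left]; exact ⟨hd2, hd3⟩
end

section
/- For every integer y, the point (-1, y) belongs to the discrete Sierpinski triangle S_∞ if and only if there exists an integer m ≥ 1 with y = 2^m − 2 or y = 2^m − 1; and the same equivalence holds for the point (0, y). In particular, the two center columns x = −1 and x = 0 of S_∞ are occupied exactly at the heights 2^m − 2 and 2^m − 1 for m ≥ 1. -/
/-- The discrete Sierpinski triangle `S_∞ = ⋃ i, S_i`. -/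
def sierpTriInf : Set (ℤ × ℤ) := ⋃ i, (sierpTri i : Set (ℤ × ℤ))

/-!
Each stage `S_i` lies in the half-plane `x ≥ -2^i` and is symmetric under `x ↦ -1 - x`.
So the left edge `x = -2^(i+1)` of `S_(i+1)` only meets the upper-left copy, which gives the
left edge of `S_i` at heights `2^(i+1) - 2, 2^(i+1) - 1` by induction; and the column `x = -1`
of `S_(i+1)` is that of `S_i` together with the right edge of the upper-left copy, i.e. by
symmetry the left edge of `S_i` raised by `2^(i+1)`. Column `0` is the mirror image of column `-1`.
-/

lemma mem_sierpTri_succ {i : ℕ} {p : ℤ × ℤ} :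
    p ∈ sierpTri (i + 1) ↔ p ∈ sierpTri i ∨
      p - ((2 : ℤ) ^ i, 2 ^ (i + 1)) ∈ sierpTri i ∨
      p - (-(2 : ℤ) ^ i, 2 ^ (i + 1)) ∈ sierpTri i := by
  simp only [sierpTri, Finset.mem_union, Finset.image_add_right, Finset.mem_preimage,
    ← sub_eq_add_neg, or_assoc]

lemma mem_sierpTri_succ_mk {i : ℕ} {x y : ℤ} :
    (x, y) ∈ sierpTri (i + 1) ↔ (x, y) ∈ sierpTri i ∨
      (x - 2 ^ i, y - 2 ^ (i + 1)) ∈ sierpTri i ∨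
      (x + 2 ^ i, y - 2 ^ (i + 1)) ∈ sierpTri i := by
  simp only [mem_sierpTri_succ, Prod.mk_sub_mk, sub_neg_eq_add]

lemma neg_one_sub_mem_sierpTri_iff {i : ℕ} {x y : ℤ} :
    (-1 - x, y) ∈ sierpTri i ↔ (x, y) ∈ sierpTri i := by
  induction i generalizing x y with
  | zero =>
    simp only [sierpTri, Finset.mem_insert, Finset.mem_singleton, Prod.mk.injEq]
    omega
  | succ i ih =>
    rw [mem_sierpTri_succ_mk, mem_sierpTri_succ_mk, ih,
      show -1 - x - 2 ^ i = -1 - (x + 2 ^ i) by ring, ih,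
      show -1 - x + 2 ^ i = -1 - (x - 2 ^ i) by ring, ih]
    tauto

lemma neg_two_pow_le_of_mem_sierpTri {i : ℕ} {p : ℤ × ℤ} (hp : p ∈ sierpTri i) :
    -2 ^ i ≤ p.1 := by
  induction i generalizing p with
  | zero =>
    simp only [sierpTri, Finset.mem_insert, Finset.mem_singleton] at hp
    rcases hp with rfl | rfl | rfl | rfl <;> norm_num
  | succ i ih =>
    have hpow : (2 : ℤ) ^ (i + 1) = 2 * 2 ^ i := by ring
    have hpos : (0 : ℤ) < 2 ^ i := by positivity
    rcases mem_sierpTri_succ.mp hp with h | h | h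
    · have := ih h; omega
    · have := ih h; simp only [Prod.fst_sub] at this; omega
    · have := ih h; simp only [Prod.fst_sub] at this; omega

lemma mem_sierpTri_left_edge {i : ℕ} {y : ℤ} :
    (-2 ^ i, y) ∈ sierpTri i ↔ y = 2 ^ (i + 1) - 2 ∨ y = 2 ^ (i + 1) - 1 := by
  induction i generalizing y with
  | zero =>
    simp only [sierpTri, Finset.mem_insert, Finset.mem_singleton, Prod.mk.injEq]
    norm_num
  | succ i ih =>
    have hpow : (2 : ℤ) ^ (i + 1) = 2 * 2 ^ i := by ring
    have hpow' : (2 : ℤ) ^ (i + 2) = 2 * 2 ^ (i + 1) := by ring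
    have hpos : (0 : ℤ) < 2 ^ i := by positivity
    have notMem_of_lt (x y : ℤ) (hx : x < -2 ^ i) : (x, y) ∉ sierpTri i := fun h ↦
      (neg_two_pow_le_of_mem_sierpTri h).not_gt hx
    rw [mem_sierpTri_succ_mk, show -(2 : ℤ) ^ (i + 1) + 2 ^ i = -2 ^ i by omega, ih]
    simp only [notMem_of_lt _ _ (by omega : -(2 : ℤ) ^ (i + 1) < -2 ^ i),
      notMem_of_lt _ _ (by omega : -(2 : ℤ) ^ (i + 1) - 2 ^ i < -2 ^ i), false_or]
    omega

lemma mem_sierpTri_neg_one {i : ℕ} {y : ℤ} :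
    (-1, y) ∈ sierpTri i ↔ ∃ m ≤ i, y = 2 ^ (m + 1) - 2 ∨ y = 2 ^ (m + 1) - 1 := by
  induction i generalizing y with
  | zero => simpa using mem_sierpTri_left_edge (i := 0) (y := y)
  | succ i ih =>
    have hpos : (0 : ℤ) < 2 ^ i := by positivity
    have hfar : (-1 - 2 ^ i, y - 2 ^ (i + 1)) ∉ sierpTri i := fun h ↦
      (neg_two_pow_le_of_mem_sierpTri h).not_gt (by simp only; omega)
    have hpow : (2 : ℤ) ^ (i + 2) = 2 * 2 ^ (i + 1) := by ring
    rw [mem_sierpTri_succ_mk, ih, ← neg_one_sub_mem_sierpTri_iff (x := -1 + 2 ^ i),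
      show -1 - (-1 + 2 ^ i) = -(2 : ℤ) ^ i by ring, mem_sierpTri_left_edge]
    simp only [hfar, false_or]
    constructor
    · rintro (⟨m, hm, h⟩ | h)
      · exact ⟨m, hm.trans i.le_succ, h⟩
      · exact ⟨i + 1, le_rfl, by omega⟩
    · rintro ⟨m, hm, h⟩
      rcases hm.lt_or_eq with hm | rfl
      · exact Or.inl ⟨m, Nat.lt_succ_iff.mp hm, h⟩
      · right; omega

lemma mem_sierpTriInf {p : ℤ × ℤ} : p ∈ sierpTriInf ↔ ∃ i, p ∈ sierpTri i := by
  simp only [sierpTriInf, Set.mem_iUnion, Finset.mem_coe]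

lemma neg_one_sub_mem_sierpTriInf_iff {x y : ℤ} :
    (-1 - x, y) ∈ sierpTriInf ↔ (x, y) ∈ sierpTriInf := by
  simp only [mem_sierpTriInf, neg_one_sub_mem_sierpTri_iff]

/-- For every integer `y`, the point `(-1, y)` lies in `S_∞` iff
there is an integer `m ≥ 1` with `y = 2^m - 2` or `y = 2^m - 1`, and the same
equivalence holds for `(0, y)`: the two center columns `x = -1` and `x = 0` are
occupied exactly at heights `2^m - 2` and `2^m - 1` for `m ≥ 1`. -/
theorem sierpTriInf_center_columns (y : ℤ) :
    ((((-1 : ℤ), y) ∈ sierpTriInf) ↔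
      ∃ m : ℕ, 1 ≤ m ∧ (y = 2 ^ m - 2 ∨ y = 2 ^ m - 1)) ∧
    ((((0 : ℤ), y) ∈ sierpTriInf) ↔
      ∃ m : ℕ, 1 ≤ m ∧ (y = 2 ^ m - 2 ∨ y = 2 ^ m - 1)) := by
  have hleft : ((-1 : ℤ), y) ∈ sierpTriInf ↔
      ∃ m : ℕ, 1 ≤ m ∧ (y = 2 ^ m - 2 ∨ y = 2 ^ m - 1) := by
    simp only [mem_sierpTriInf, mem_sierpTri_neg_one]
    constructor
    · rintro ⟨i, m, -, h⟩
      exact ⟨m + 1, m.succ_pos, h⟩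
    · rintro ⟨m, hm, h⟩
      obtain ⟨k, rfl⟩ := Nat.exists_eq_add_of_le' hm
      exact ⟨k, k, le_rfl, h⟩
  refine ⟨hleft, ?_⟩
  rw [← neg_one_sub_mem_sierpTriInf_iff, sub_zero]
  exact hleft
end

section
/- Let c, i, j, k be positive integers with k > i, j > i, and i ≥ 1. Then for every positive integer d and all integers δ, Δ with 0 ≤ δ ≤ 2c − 1 and 0 ≤ Δ ≤ 2c − 1, we have c·2^{k+1} + δ + c·2^{j+1} − c·2^{i+1} ≠ d·c·2^{k+1} + Δ. In other words, a number of the form c·2^{k+1} + δ, after translation by c·2^{j+1} − c·2^{i+1}, can never equal a positive integer multiple of c·2^{k+1} plus an offset Δ between 0 and 2c − 1. -/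
/-- For positive integers `c, i, j, k, d` with `k > i`, `j > i`,
and `i ≥ 1`, and integer offsets `0 ≤ δ ≤ 2c - 1` and `0 ≤ Δ ≤ 2c - 1`, the number
`c·2^(k+1) + δ`, after translation by `c·2^(j+1) - c·2^(i+1)`, can never equal a
positive integer multiple of `c·2^(k+1)` plus the offset `Δ`. -/
theorem choke_point_landing (c i j k d : ℕ)
    (hc : 0 < c) (hi : 1 ≤ i) (hki : i < k) (hji : i < j) (hd : 0 < d)
    (δ Δ : ℤ) (hδ0 : 0 ≤ δ) (hδ1 : δ ≤ 2 * (c : ℤ) - 1)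
    (hΔ0 : 0 ≤ Δ) (hΔ1 : Δ ≤ 2 * (c : ℤ) - 1) :
    (c : ℤ) * 2 ^ (k + 1) + δ + (c : ℤ) * 2 ^ (j + 1) - (c : ℤ) * 2 ^ (i + 1)
      ≠ (d : ℤ) * ((c : ℤ) * 2 ^ (k + 1)) + Δ := by
  intro h
  have e1 : (2:ℤ) ^ (k + 1) = 2 ^ (i + 1) * 2 ^ (k - i) := by
    rw [← pow_add]; congr 1; omega
  have e2 : (2:ℤ) ^ (j + 1) = 2 ^ (i + 1) * 2 ^ (j - i) := by
    rw [← pow_add]; congr 1; omega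
  rw [e1, e2] at h
  have key : δ - Δ = (c:ℤ) * 2 ^ (i + 1) *
      (((d:ℤ) - 1) * 2 ^ (k - i) - 2 ^ (j - i) + 1) := by linear_combination h
  have hodd : Odd (((d:ℤ) - 1) * 2 ^ (k - i) - 2 ^ (j - i) + 1) := by
    have h1 : Even (((d:ℤ) - 1) * 2 ^ (k - i)) :=
      (Int.even_pow.mpr ⟨even_two, by omega⟩).mul_left _
    have h2 : Even ((2:ℤ) ^ (j - i)) := Int.even_pow.mpr ⟨even_two, by omega⟩
    exact (h1.sub h2).add_one
  have hN0 : (((d:ℤ) - 1) * 2 ^ (k - i) - 2 ^ (j - i) + 1) ≠ 0 := by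
    intro h0; rw [h0] at hodd; simp at hodd
  have habs : (1:ℤ) ≤ |((d:ℤ) - 1) * 2 ^ (k - i) - 2 ^ (j - i) + 1| :=
    Int.one_le_abs hN0
  have h4 : (4:ℤ) ≤ 2 ^ (i + 1) := by
    calc (4:ℤ) = 2 ^ 2 := by norm_num
    _ ≤ 2 ^ (i + 1) := pow_le_pow_right₀ (by norm_num) (by omega)
  have hc1 : (1:ℤ) ≤ (c:ℤ) := by exact_mod_cast hc
  have hlower : (c:ℤ) * 4 ≤ |δ - Δ| := by
    rw [key, abs_mul, abs_mul, abs_of_nonneg (by positivity : (0:ℤ) ≤ (c:ℤ)),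
      abs_of_nonneg (by positivity : (0:ℤ) ≤ (2:ℤ) ^ (i + 1))]
    have hstep : (c:ℤ) * 2 ^ (i + 1) ≤ (c:ℤ) * 2 ^ (i + 1) *
        |((d:ℤ) - 1) * 2 ^ (k - i) - 2 ^ (j - i) + 1| :=
      le_mul_of_one_le_right (by positivity) habs
    nlinarith
  have hupper : |δ - Δ| ≤ 2 * (c:ℤ) - 1 := abs_le.mpr ⟨by linarith, by linarith⟩
  linarith
end
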